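/- For all distinct i, j ∈ I and all b ∈ 𝓑(∞), f̃_i(f̃*_j(b)) = f̃*_j(f̃_i(b)). -/

import Mathlib

open Finset

/-- Membership of `(s,t)` in the index set `𝓘 = {(s,t) : 1 ≤ s, 1 ≤ t ≤ n, s+t ≤ n+1}`
for type `Aₙ`. -/
def cellA (n : ℕ) (s t : ℤ) : Prop :=
  1 ≤ s ∧ 1 ≤ t ∧ t ≤ (n : ℤ) ∧ s + t ≤ (n : ℤ) + 1

instance (n : ℕ) (s t : ℤ) : Decidable (cellA n s t) := by
  unfold cellA; infer_instance

/-- The type-`Aₙ` polyhedral realization `𝓑(∞)`: families of nonnegative integers,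
vanishing outside `𝓘`, with `b_{s,t} ≥ b_{s+1,t-1}` for `s ≥ 1`, `2 ≤ t ≤ n`. -/
def BinfA (n : ℕ) : Set (ℤ → ℤ → ℤ) :=
  {b | (∀ s t, 0 ≤ b s t) ∧
       (∀ s t, ¬ cellA n s t → b s t = 0) ∧
       (∀ s t, 1 ≤ s → 2 ≤ t → t ≤ (n : ℤ) → b (s + 1) (t - 1) ≤ b s t)}

/-- The standard basis family `e_{s,t}` (zero if `(s,t) ∉ 𝓘`). -/
def eA (n : ℕ) (s t : ℤ) : ℤ → ℤ → ℤ :=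
  fun u v => if u = s ∧ v = t ∧ cellA n s t then 1 else 0

/-- `∂_{s,t}(b) = b_{s,t} − b_{s,t+1} − b_{s+1,t−1} + b_{s+1,t}`. -/
def dA (b : ℤ → ℤ → ℤ) (s t : ℤ) : ℤ :=
  b s t - b s (t + 1) - b (s + 1) (t - 1) + b (s + 1) t

/-- `∂*_{s,t}(b) = b_{s−1,t} − b_{s−1,t+1} − b_{s,t−1} + b_{s,t}`. -/
def dsA (b : ℤ → ℤ → ℤ) (s t : ℤ) : ℤ :=
  b (s - 1) t - b (s - 1) (t + 1) - b s (t - 1) + b s t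

/-- `Γ^{(i)}_k(b) = Σ_{s=k}^{n+1−i} ∂_{s,i}(b)`. -/
noncomputable def GamA (n : ℕ) (b : ℤ → ℤ → ℤ) (i k : ℤ) : ℤ :=
  ∑ s ∈ Finset.Icc k ((n : ℤ) + 1 - i), dA b s i

/-- `Γ*^{(i)}_k(b) = Σ_{t=1}^{k} ∂*_{t,i+1−t}(b)`. -/
noncomputable def GamSA (b : ℤ → ℤ → ℤ) (i k : ℤ) : ℤ :=
  ∑ t ∈ Finset.Icc (1 : ℤ) k, dsA b t (i + 1 - t)

/-- `ε_i(b) = max_{1≤k≤n+1−i} Γ^{(i)}_k(b)`. -/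
noncomputable def epsA (n : ℕ) (b : ℤ → ℤ → ℤ) (i : ℤ) : ℤ :=
  WithBot.unbotD 0 ((Finset.Icc (1 : ℤ) ((n : ℤ) + 1 - i)).image (GamA n b i)).max

/-- `ε*_i(b) = max_{1≤k≤i} Γ*^{(i)}_k(b)`. -/
noncomputable def epsSA (b : ℤ → ℤ → ℤ) (i : ℤ) : ℤ :=
  WithBot.unbotD 0 ((Finset.Icc (1 : ℤ) i).image (GamSA b i)).max

/-- `m_i(b)`: the smallest `k` attaining `ε_i(b)`. -/
noncomputable def mA (n : ℕ) (b : ℤ → ℤ → ℤ) (i : ℤ) : ℤ :=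
  WithTop.untopD 0 ((Finset.Icc (1 : ℤ) ((n : ℤ) + 1 - i)).filter
      (fun k => GamA n b i k = epsA n b i)).min

/-- `m*_i(b)`: the smallest `k` attaining `ε*_i(b)`. -/
noncomputable def mSA (b : ℤ → ℤ → ℤ) (i : ℤ) : ℤ :=
  WithTop.untopD 0 ((Finset.Icc (1 : ℤ) i).filter (fun k => GamSA b i k = epsSA b i)).min

/-- `M*_i(b)`: the largest `k` attaining `ε*_i(b)`. -/
noncomputable def MSA (b : ℤ → ℤ → ℤ) (i : ℤ) : ℤ :=
  WithBot.unbotD 0 ((Finset.Icc (1 : ℤ) i).filter (fun k => GamSA b i k = epsSA b i)).max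

/-- `f̃_i(b) = b + e_{m_i(b),i}`. -/
noncomputable def fA (n : ℕ) (b : ℤ → ℤ → ℤ) (i : ℤ) : ℤ → ℤ → ℤ :=
  fun u v => b u v + eA n (mA n b i) i u v

/-- `f̃*_i(b) = b + Σ_{s=1}^{m*_i(b)} (e_{s,i+1−s} − e_{s−1,i+1−s})`. -/
noncomputable def fSA (n : ℕ) (b : ℤ → ℤ → ℤ) (i : ℤ) : ℤ → ℤ → ℤ :=
  fun u v => b u v +
    ∑ s ∈ Finset.Icc (1 : ℤ) (mSA b i),
      (eA n s (i + 1 - s) u v - eA n (s - 1) (i + 1 - s) u v)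

/-- `ẽ*_i(b) = b − Σ_{s=1}^{M*_i(b)} (e_{s,i+1−s} − e_{s−1,i+1−s})`. -/
noncomputable def eSA (n : ℕ) (b : ℤ → ℤ → ℤ) (i : ℤ) : ℤ → ℤ → ℤ :=
  fun u v => b u v -
    ∑ s ∈ Finset.Icc (1 : ℤ) (MSA b i),
      (eA n s (i + 1 - s) u v - eA n (s - 1) (i + 1 - s) u v)


/-! ### Auxiliary machinery -/

section Aux

open Finset

/-- max over `Icc 1 N` of `g`. -/
noncomputable def EPS (N : ℤ) (g : ℤ → ℤ) : ℤ := WithBot.unbotD 0 ((Finset.Icc (1:ℤ) N).image g).max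

/-- smallest maximizer of `g` on `Icc 1 N`. -/
noncomputable def AMIN (N : ℤ) (g : ℤ → ℤ) : ℤ :=
  WithTop.untopD 0 ((Finset.Icc (1:ℤ) N).filter (fun k => g k = EPS N g)).min

lemma AMIN_eq {N m : ℤ} (g : ℤ → ℤ) (hm : m ∈ Finset.Icc (1:ℤ) N)
    (hmax : ∀ k ∈ Finset.Icc (1:ℤ) N, g k ≤ g m)
    (hmin : ∀ k ∈ Finset.Icc (1:ℤ) N, k < m → g k < g m) :
    AMIN N g = m := by
  have hSne : (Finset.Icc (1:ℤ) N).Nonempty := ⟨m, hm⟩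
  have himg : ((Finset.Icc (1:ℤ) N).image g).Nonempty := hSne.image g
  have hE : EPS N g = ((Finset.Icc (1:ℤ) N).image g).max' himg := by
    rw [EPS, ← Finset.coe_max' himg]; rfl
  have hEgm : EPS N g = g m := by
    rw [hE]
    refine le_antisymm ?_ (Finset.le_max' _ _ (Finset.mem_image_of_mem g hm))
    obtain ⟨k, hk, hgk⟩ := Finset.mem_image.1 (Finset.max'_mem _ himg)
    rw [← hgk]; exact hmax k hk
  have hmF : m ∈ (Finset.Icc (1:ℤ) N).filter (fun k => g k = EPS N g) :=
    Finset.mem_filter.2 ⟨hm, hEgm.symm⟩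
  have hFne : ((Finset.Icc (1:ℤ) N).filter (fun k => g k = EPS N g)).Nonempty := ⟨m, hmF⟩
  have hmin' : ((Finset.Icc (1:ℤ) N).filter (fun k => g k = EPS N g)).min' hFne = m := by
    refine le_antisymm (Finset.min'_le _ _ hmF) (Finset.le_min' _ _ _ ?_)
    intro y hy
    obtain ⟨hyS, hgy⟩ := Finset.mem_filter.1 hy
    by_contra hlt
    exact absurd (hgy.trans hEgm) (ne_of_lt (hmin y hyS (by omega)))
  rw [AMIN, ← Finset.coe_min' hFne, hmin']; rfl

lemma AMIN_spec {N : ℤ} (hN : (1:ℤ) ≤ N) (g : ℤ → ℤ) :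
    AMIN N g ∈ Finset.Icc (1:ℤ) N ∧ (∀ k ∈ Finset.Icc (1:ℤ) N, g k ≤ g (AMIN N g)) ∧
      (∀ k ∈ Finset.Icc (1:ℤ) N, k < AMIN N g → g k < g (AMIN N g)) := by
  have hSne : (Finset.Icc (1:ℤ) N).Nonempty := ⟨1, by simp [hN]⟩
  have himg : ((Finset.Icc (1:ℤ) N).image g).Nonempty := hSne.image g
  have hE : EPS N g = ((Finset.Icc (1:ℤ) N).image g).max' himg := by
    rw [EPS, ← Finset.coe_max' himg]; rfl
  obtain ⟨k0, hk0, hgk0⟩ := Finset.mem_image.1 (Finset.max'_mem _ himg)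
  have hFne : ((Finset.Icc (1:ℤ) N).filter (fun k => g k = EPS N g)).Nonempty :=
    ⟨k0, Finset.mem_filter.2 ⟨hk0, by rw [hgk0, hE]⟩⟩
  have hA : AMIN N g = ((Finset.Icc (1:ℤ) N).filter (fun k => g k = EPS N g)).min' hFne := by
    rw [AMIN, ← Finset.coe_min' hFne]; rfl
  have hmF := Finset.min'_mem _ hFne
  rw [← hA] at hmF
  obtain ⟨hmS, hgm⟩ := Finset.mem_filter.1 hmF
  refine ⟨hmS, fun k hk => ?_, fun k hk hklt => ?_⟩
  · rw [hgm, hE]; exact Finset.le_max' _ _ (Finset.mem_image_of_mem g hk)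
  · have hle : g k ≤ g (AMIN N g) := by
      rw [hgm, hE]; exact Finset.le_max' _ _ (Finset.mem_image_of_mem g hk)
    rcases lt_or_eq_of_le hle with h | h
    · exact h
    · exfalso
      have hkF : k ∈ (Finset.Icc (1:ℤ) N).filter (fun k => g k = EPS N g) :=
        Finset.mem_filter.2 ⟨hk, by rw [h, hgm]⟩
      have := Finset.min'_le _ _ hkF
      rw [← hA] at this; omega

lemma AMIN_stable {N k0 k1 : ℤ} (g g' : ℤ → ℤ) (hN : (1:ℤ) ≤ N) (hk01 : k0 = k1 + 1)
    (hcase :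
      (2 ≤ k0 ∧ k0 ≤ N ∧ (∀ k ∈ Finset.Icc (1:ℤ) N, g' k = g k + if k = k0 then 1 else 0)
          ∧ g k0 + 1 ≤ g k1)
      ∨ (2 ≤ k0 ∧ k0 ≤ N ∧ (∀ k ∈ Finset.Icc (1:ℤ) N, g' k = g k - if k = k1 then 1 else 0)
          ∧ AMIN N g ≠ k1)
      ∨ (∀ k ∈ Finset.Icc (1:ℤ) N, g' k = g k)) :
    AMIN N g' = AMIN N g := by
  obtain ⟨hmS, hmax, hmin⟩ := AMIN_spec hN g
  rcases hcase with ⟨hk0, hk0N, hf, hkey⟩ | ⟨hk0, hk0N, hf, hne⟩ | hf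
  · have hk1S : k1 ∈ Finset.Icc (1:ℤ) N := by rw [Finset.mem_Icc]; omega
    have hkey2 : g k1 ≤ g (AMIN N g) := hmax k1 hk1S
    refine AMIN_eq g' hmS (fun k hk => ?_) (fun k hk hklt => ?_)
    · rw [hf k hk, hf _ hmS]
      have h1 := hmax k hk
      by_cases hkk : k = k0
      · subst hkk; split_ifs <;> omega
      · split_ifs <;> omega
    · rw [hf k hk, hf _ hmS]
      have h1 := hmin k hk hklt
      by_cases hkk : k = k0
      · subst hkk
        have h2 : g k1 < g (AMIN N g) := hmin k1 hk1S (by omega)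
        split_ifs <;> omega
      · split_ifs <;> omega
  · refine AMIN_eq g' hmS (fun k hk => ?_) (fun k hk hklt => ?_)
    · rw [hf k hk, hf _ hmS]
      have h1 := hmax k hk
      split_ifs <;> omega
    · rw [hf k hk, hf _ hmS]
      have h1 := hmin k hk hklt
      split_ifs <;> omega
  · refine AMIN_eq g' hmS (fun k hk => ?_) (fun k hk hklt => ?_)
    · rw [hf k hk, hf _ hmS]; exact hmax k hk
    · rw [hf k hk, hf _ hmS]; exact hmin k hk hklt

lemma AMIN_special {N k0 k1 : ℤ} (g g' : ℤ → ℤ) (hN : (1:ℤ) ≤ N) (hk0 : 2 ≤ k0)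
    (hk0N : k0 ≤ N) (hk01 : k0 = k1 + 1)
    (hf : ∀ k ∈ Finset.Icc (1:ℤ) N, g' k = g k - if k = k1 then 1 else 0)
    (hAM : AMIN N g = k1) (heq : g k0 = g k1) :
    AMIN N g' = k0 := by
  obtain ⟨hmS, hmax, hmin⟩ := AMIN_spec hN g
  rw [hAM] at hmS hmax hmin
  refine AMIN_eq g' (by rw [Finset.mem_Icc]; omega) (fun k hk => ?_) (fun k hk hklt => ?_)
  · rw [hf k hk, hf k0 (by rw [Finset.mem_Icc]; omega)]
    have h1 := hmax k hk
    by_cases hkk : k = k1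
    · subst hkk; split_ifs <;> omega
    · split_ifs <;> omega
  · rw [hf k hk, hf k0 (by rw [Finset.mem_Icc]; omega)]
    by_cases hkk : k = k1
    · subst hkk; split_ifs <;> omega
    · have h1 := hmin k hk (by omega)
      split_ifs <;> omega

lemma sum_single_pt {S : Finset ℤ} {f : ℤ → ℤ} (a : ℤ)
    (h : ∀ s ∈ S, s ≠ a → f s = 0) :
    ∑ s ∈ S, f s = if a ∈ S then f a else 0 := by
  by_cases ha : a ∈ S
  · rw [if_pos ha]; exact Finset.sum_eq_single_of_mem a ha h
  · rw [if_neg ha]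
    exact Finset.sum_eq_zero (fun s hs => h s hs (fun e => ha (e ▸ hs)))

lemma sum_ite_pt {lo hi : ℤ} (a : ℤ) (P : ℤ → Prop) [DecidablePred P]
    (h : ∀ s, P s → s = a) :
    ∑ s ∈ Finset.Icc lo hi, (if P s then (1:ℤ) else 0)
      = if lo ≤ a ∧ a ≤ hi ∧ P a then 1 else 0 := by
  rw [sum_single_pt a (fun s _ hne => if_neg (fun hp => hne (h s hp)))]
  simp only [Finset.mem_Icc]
  split_ifs <;> first | rfl | tauto

/-- closed form for the diagonal increment of `f̃*_j`. -/
lemma diag_closed (n : ℕ) (j m' : ℤ) (hj1 : 1 ≤ j) (hjn : j ≤ (n:ℤ))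
    (hm1 : 1 ≤ m') (hmj : m' ≤ j) (u v : ℤ) :
    ∑ s ∈ Finset.Icc (1:ℤ) m', (eA n s (j+1-s) u v - eA n (s-1) (j+1-s) u v)
    = (if 1 ≤ u ∧ u ≤ m' ∧ v = j+1-u then 1 else 0)
      - (if 1 ≤ u ∧ u ≤ m'-1 ∧ v = j-u then 1 else 0) := by
  rw [Finset.sum_sub_distrib]
  have h1 : ∑ s ∈ Finset.Icc (1:ℤ) m', eA n s (j+1-s) u v
      = if u ∈ Finset.Icc (1:ℤ) m' then eA n u (j+1-u) u v else 0 := by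
    refine sum_single_pt u (fun s hs hne => ?_)
    rw [eA, if_neg]; rintro ⟨h1, -⟩; exact hne h1.symm
  have h2 : ∑ s ∈ Finset.Icc (1:ℤ) m', eA n (s-1) (j+1-s) u v
      = if (u+1) ∈ Finset.Icc (1:ℤ) m' then eA n (u+1-1) (j+1-(u+1)) u v else 0 := by
    refine sum_single_pt (u+1) (fun s hs hne => ?_)
    rw [eA, if_neg]; rintro ⟨h1, -⟩; exact hne (by omega)
  rw [h1, h2]
  simp only [eA, cellA, Finset.mem_Icc, true_and]
  split_ifs <;> omega

set_option maxHeartbeats 1000000 in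
/-- effect of `f̃*_j` (with `m' = m*_j(b)`) on `Γ^{(i)}_k`. -/
lemma Gam_diff (n : ℕ) (i j m' : ℤ) (hi1 : 1 ≤ i) (hin : i ≤ (n:ℤ))
    (hj1 : 1 ≤ j) (hjn : j ≤ (n:ℤ)) (hm1 : 1 ≤ m') (hmj : m' ≤ j)
    (b : ℤ → ℤ → ℤ) (k : ℤ) (hk : 1 ≤ k) :
    GamA n (fun u v => b u v
        + ∑ s ∈ Finset.Icc (1:ℤ) m', (eA n s (j+1-s) u v - eA n (s-1) (j+1-s) u v)) i k
    = GamA n b i k + ((if m' = j+1-i ∧ k = j+1-i then 1 else 0)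
        - (if m' = j-i ∧ k = j-i then 1 else 0)) := by
  have hstep : GamA n (fun u v => b u v
        + ∑ s ∈ Finset.Icc (1:ℤ) m', (eA n s (j+1-s) u v - eA n (s-1) (j+1-s) u v)) i k
      = GamA n b i k + ∑ s ∈ Finset.Icc k ((n:ℤ)+1-i),
         ((if 1 ≤ s ∧ s ≤ m' ∧ i = j+1-s then (1:ℤ) else 0)
         - (if 1 ≤ s ∧ s ≤ m'-1 ∧ i = j-s then 1 else 0)
         - (if 1 ≤ s ∧ s ≤ m' ∧ i+1 = j+1-s then 1 else 0)
         + (if 1 ≤ s ∧ s ≤ m'-1 ∧ i+1 = j-s then 1 else 0)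
         - (if 1 ≤ s+1 ∧ s+1 ≤ m' ∧ i-1 = j+1-(s+1) then 1 else 0)
         + (if 1 ≤ s+1 ∧ s+1 ≤ m'-1 ∧ i-1 = j-(s+1) then 1 else 0)
         + (if 1 ≤ s+1 ∧ s+1 ≤ m' ∧ i = j+1-(s+1) then 1 else 0)
         - (if 1 ≤ s+1 ∧ s+1 ≤ m'-1 ∧ i = j-(s+1) then 1 else 0)) := by
    rw [GamA, GamA, ← Finset.sum_add_distrib]
    refine Finset.sum_congr rfl (fun s hs => ?_)
    simp only [dA]
    rw [diag_closed n j m' hj1 hjn hm1 hmj s i,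
        diag_closed n j m' hj1 hjn hm1 hmj s (i+1),
        diag_closed n j m' hj1 hjn hm1 hmj (s+1) (i-1),
        diag_closed n j m' hj1 hjn hm1 hmj (s+1) i]
    ring
  rw [hstep]
  congr 1
  simp only [Finset.sum_sub_distrib, Finset.sum_add_distrib]
  rw [sum_ite_pt (j+1-i) (fun s => 1 ≤ s ∧ s ≤ m' ∧ i = j+1-s) (fun s hs => by omega),
      sum_ite_pt (j-i) (fun s => 1 ≤ s ∧ s ≤ m'-1 ∧ i = j-s) (fun s hs => by omega),
      sum_ite_pt (j-i) (fun s => 1 ≤ s ∧ s ≤ m' ∧ i+1 = j+1-s) (fun s hs => by omega),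
      sum_ite_pt (j-i-1) (fun s => 1 ≤ s ∧ s ≤ m'-1 ∧ i+1 = j-s) (fun s hs => by omega),
      sum_ite_pt (j+1-i) (fun s => 1 ≤ s+1 ∧ s+1 ≤ m' ∧ i-1 = j+1-(s+1)) (fun s hs => by omega),
      sum_ite_pt (j-i) (fun s => 1 ≤ s+1 ∧ s+1 ≤ m'-1 ∧ i-1 = j-(s+1)) (fun s hs => by omega),
      sum_ite_pt (j-i) (fun s => 1 ≤ s+1 ∧ s+1 ≤ m' ∧ i = j+1-(s+1)) (fun s hs => by omega),
      sum_ite_pt (j-i-1) (fun s => 1 ≤ s+1 ∧ s+1 ≤ m'-1 ∧ i = j-(s+1)) (fun s hs => by omega)]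
  split_ifs <;> omega

/-- effect of `f̃_i` (with `m = m_i(b)`) on `Γ*^{(j)}_k`. -/
lemma GamS_diff (n : ℕ) (i j m : ℤ) (hi1 : 1 ≤ i) (hin : i ≤ (n:ℤ))
    (hj1 : 1 ≤ j) (hjn : j ≤ (n:ℤ)) (hm1 : 1 ≤ m) (hmN : m ≤ (n:ℤ)+1-i)
    (b : ℤ → ℤ → ℤ) (k : ℤ) (hk : 1 ≤ k) (hkj : k ≤ j) :
    GamSA (fun u v => b u v + eA n m i u v) j k
    = GamSA b j k + ((if m = j+1-i ∧ k = j+1-i then 1 else 0)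
        - (if m = j-i ∧ k = j-i then 1 else 0)) := by
  have hcell : cellA n m i := by unfold cellA; omega
  have he : ∀ u v : ℤ, eA n m i u v = if u = m ∧ v = i then 1 else 0 := by
    intro u v; rw [eA]
    split_ifs with h1 h2 h2 <;> first | rfl | tauto
  have hstep : GamSA (fun u v => b u v + eA n m i u v) j k
      = GamSA b j k + ∑ t ∈ Finset.Icc (1:ℤ) k,
          ((if t-1 = m ∧ j+1-t = i then (1:ℤ) else 0)
          - (if t-1 = m ∧ j+1-t+1 = i then 1 else 0)
          - (if t = m ∧ j+1-t-1 = i then 1 else 0)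
          + (if t = m ∧ j+1-t = i then 1 else 0)) := by
    rw [GamSA, GamSA, ← Finset.sum_add_distrib]
    refine Finset.sum_congr rfl (fun t ht => ?_)
    simp only [dsA]
    rw [he (t-1) (j+1-t), he (t-1) (j+1-t+1), he t (j+1-t-1), he t (j+1-t)]
    ring
  rw [hstep]
  congr 1
  simp only [Finset.sum_sub_distrib, Finset.sum_add_distrib]
  rw [sum_ite_pt (m+1) (fun t => t-1 = m ∧ j+1-t = i) (fun t ht => by omega),
      sum_ite_pt (m+1) (fun t => t-1 = m ∧ j+1-t+1 = i) (fun t ht => by omega),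
      sum_ite_pt m (fun t => t = m ∧ j+1-t-1 = i) (fun t ht => by omega),
      sum_ite_pt m (fun t => t = m ∧ j+1-t = i) (fun t ht => by omega)]
  split_ifs <;> omega

/-- the bridge identity between `Γ^{(i)}` and `Γ*^{(j)}` across the antidiagonal. -/
lemma bridge (n : ℕ) (i j : ℤ) (hi1 : 1 ≤ i) (hin : i ≤ (n:ℤ))
    (hj1 : 1 ≤ j) (hjn : j ≤ (n:ℤ)) (hij : i < j) (b : ℤ → ℤ → ℤ) :
    GamA n b i (j-i) - GamA n b i (j+1-i) = GamSA b j (j+1-i) - GamSA b j (j-i) := by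
  have h1 : Finset.Icc (j-i) ((n:ℤ)+1-i)
      = insert (j-i) (Finset.Icc (j+1-i) ((n:ℤ)+1-i)) := by
    ext x; simp only [Finset.mem_Icc, Finset.mem_insert]; omega
  have h2 : Finset.Icc (1:ℤ) (j+1-i) = insert (j+1-i) (Finset.Icc (1:ℤ) (j-i)) := by
    ext x; simp only [Finset.mem_Icc, Finset.mem_insert]; omega
  have hn1 : (j-i) ∉ Finset.Icc (j+1-i) ((n:ℤ)+1-i) := by
    simp only [Finset.mem_Icc]; omega
  have hn2 : (j+1-i) ∉ Finset.Icc (1:ℤ) (j-i) := by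
    simp only [Finset.mem_Icc]; omega
  rw [GamA, GamA, GamSA, GamSA, h1, h2, Finset.sum_insert hn1, Finset.sum_insert hn2]
  have e1 : dsA b (j+1-i) (j+1-(j+1-i)) = dA b (j-i) i := by
    have h3 : (j:ℤ)+1-(j+1-i) = i := by ring
    rw [h3, dsA, dA]
    have e2 : (j:ℤ)+1-i-1 = j-i := by ring
    have e3 : (j:ℤ)-i+1 = j+1-i := by ring
    rw [e2, e3]
  rw [e1]; ring

end Aux

set_option maxHeartbeats 1000000 in
/-- `f̃_i(f̃*_j(b)) = f̃*_j(f̃_i(b))` for distinct `i, j ∈ I`. -/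
theorem stmt13 (n : ℕ) (hn : 1 ≤ n) (i j : ℤ)
    (hi1 : 1 ≤ i) (hin : i ≤ (n : ℤ)) (hj1 : 1 ≤ j) (hjn : j ≤ (n : ℤ))
    (hij : i ≠ j) (b : ℤ → ℤ → ℤ) (hb : b ∈ BinfA n) :
    fA n (fSA n b j) i = fSA n (fA n b i) j := by
  have hN : (1:ℤ) ≤ (n:ℤ)+1-i := by omega
  have hmdef : AMIN ((n:ℤ)+1-i) (GamA n b i) = mA n b i := rfl
  obtain ⟨hmS, hmax, hmin⟩ := AMIN_spec hN (GamA n b i)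
  rw [hmdef] at hmS hmax hmin
  have hsdef : AMIN j (GamSA b j) = mSA b j := rfl
  obtain ⟨hsS, hsmax, hsmin⟩ := AMIN_spec hj1 (GamSA b j)
  rw [hsdef] at hsS hsmax hsmin
  rw [Finset.mem_Icc] at hmS hsS
  have hGc : ∀ k, 1 ≤ k → GamA n (fSA n b j) i k
      = GamA n b i k + ((if mSA b j = j+1-i ∧ k = j+1-i then 1 else 0)
          - (if mSA b j = j-i ∧ k = j-i then 1 else 0)) :=
    fun k hk => Gam_diff n i j (mSA b j) hi1 hin hj1 hjn hsS.1 hsS.2 b k hk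
  have hGd : ∀ k, 1 ≤ k → k ≤ j → GamSA (fA n b i) j k
      = GamSA b j k + ((if mA n b i = j+1-i ∧ k = j+1-i then 1 else 0)
          - (if mA n b i = j-i ∧ k = j-i then 1 else 0)) :=
    fun k hk hkj => GamS_diff n i j (mA n b i) hi1 hin hj1 hjn hmS.1 hmS.2 b k hk hkj
  have e1 : fA n (fSA n b j) i
      = fun u v => fSA n b j u v + eA n (mA n (fSA n b j) i) i u v := rfl
  have e2 : fSA n (fA n b i) j = fun u v => fA n b i u v
      + ∑ s ∈ Finset.Icc (1:ℤ) (mSA (fA n b i) j),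
          (eA n s (j+1-s) u v - eA n (s-1) (j+1-s) u v) := rfl
  by_cases hsp : mSA b j = j - i ∧ mA n b i = j - i
  · -- special case : both argmaxes move from j-i to j+1-i
    obtain ⟨hs_eq, hm_eq⟩ := hsp
    have hij' : i < j := by omega
    have hbr := bridge n i j hi1 hin hj1 hjn hij' b
    have h1 : GamA n b i (j+1-i) ≤ GamA n b i (mA n b i) :=
      hmax _ (by rw [Finset.mem_Icc]; omega)
    rw [hm_eq] at h1
    have h2 : GamSA b j (j+1-i) ≤ GamSA b j (mSA b j) :=
      hsmax _ (by rw [Finset.mem_Icc]; omega)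
    rw [hs_eq] at h2
    have heq1 : GamA n b i (j+1-i) = GamA n b i (j-i) := by omega
    have heq2 : GamSA b j (j+1-i) = GamSA b j (j-i) := by omega
    have hm'' : mA n (fSA n b j) i = j+1-i := by
      have key : AMIN ((n:ℤ)+1-i) (GamA n (fSA n b j) i) = j+1-i := by
        refine AMIN_special (k0 := j+1-i) (k1 := j-i) (GamA n b i) _ hN (by omega)
          (by omega) (by ring) (fun k hk => ?_) (by rw [hmdef]; exact hm_eq) heq1
        rw [Finset.mem_Icc] at hk
        rw [hGc k hk.1]
        split_ifs <;> omega
      exact key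
    have hms'' : mSA (fA n b i) j = j+1-i := by
      have key : AMIN j (GamSA (fA n b i) j) = j+1-i := by
        refine AMIN_special (k0 := j+1-i) (k1 := j-i) (GamSA b j) _ hj1 (by omega)
          (by omega) (by ring) (fun k hk => ?_) (by rw [hsdef]; exact hs_eq) heq2
        rw [Finset.mem_Icc] at hk
        rw [hGd k hk.1 hk.2]
        split_ifs <;> omega
      exact key
    rw [e1, e2, hm'', hms'']
    funext u v
    simp only [fSA, fA]
    rw [hs_eq, hm_eq]
    rw [diag_closed n j (j-i) hj1 hjn (by omega) (by omega) u v,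
        diag_closed n j (j+1-i) hj1 hjn (by omega) (by omega) u v]
    have hE0 : eA n (j+1-i) i u v = if u = j+1-i ∧ v = i then 1 else 0 := by
      have hc : cellA n (j+1-i) i := by unfold cellA; omega
      rw [eA]; split_ifs <;> first | rfl | tauto
    have hE1 : eA n (j-i) i u v = if u = j-i ∧ v = i then 1 else 0 := by
      have hc : cellA n (j-i) i := by unfold cellA; omega
      rw [eA]; split_ifs <;> first | rfl | tauto
    rw [hE0, hE1]
    split_ifs <;> first | ring1 | (exfalso; omega)
  · -- generic case : both argmaxes stay put
    have hm' : mA n (fSA n b j) i = mA n b i := by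
      have key : AMIN ((n:ℤ)+1-i) (GamA n (fSA n b j) i)
          = AMIN ((n:ℤ)+1-i) (GamA n b i) := by
        refine AMIN_stable (k0 := j+1-i) (k1 := j-i) (GamA n b i) _ hN (by ring) ?_
        by_cases hA : mSA b j = j + 1 - i
        · refine Or.inl ⟨by omega, by omega, fun k hk => ?_, ?_⟩
          · rw [Finset.mem_Icc] at hk; rw [hGc k hk.1]; split_ifs <;> omega
          · have hij' : i < j := by omega
            have hbr := bridge n i j hi1 hin hj1 hjn hij' b
            have hst : GamSA b j (j-i) < GamSA b j (mSA b j) :=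
              hsmin (j-i) (by rw [Finset.mem_Icc]; omega) (by omega)
            rw [hA] at hst
            omega
        · by_cases hB : mSA b j = j - i
          · refine Or.inr (Or.inl ⟨by omega, by omega, fun k hk => ?_, ?_⟩)
            · rw [Finset.mem_Icc] at hk; rw [hGc k hk.1]; split_ifs <;> omega
            · rw [hmdef]; exact fun h => hsp ⟨hB, h⟩
          · refine Or.inr (Or.inr (fun k hk => ?_))
            rw [Finset.mem_Icc] at hk; rw [hGc k hk.1]; split_ifs <;> omega
      rw [hmdef] at key; exact key
    have hms' : mSA (fA n b i) j = mSA b j := by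
      have key : AMIN j (GamSA (fA n b i) j) = AMIN j (GamSA b j) := by
        refine AMIN_stable (k0 := j+1-i) (k1 := j-i) (GamSA b j) _ hj1 (by ring) ?_
        by_cases hA : mA n b i = j + 1 - i
        · refine Or.inl ⟨by omega, by omega, fun k hk => ?_, ?_⟩
          · rw [Finset.mem_Icc] at hk; rw [hGd k hk.1 hk.2]; split_ifs <;> omega
          · have hij' : i < j := by omega
            have hbr := bridge n i j hi1 hin hj1 hjn hij' b
            have hst : GamA n b i (j-i) < GamA n b i (mA n b i) :=
              hmin (j-i) (by rw [Finset.mem_Icc]; omega) (by omega)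
            rw [hA] at hst
            omega
        · by_cases hB : mA n b i = j - i
          · refine Or.inr (Or.inl ⟨by omega, by omega, fun k hk => ?_, ?_⟩)
            · rw [Finset.mem_Icc] at hk; rw [hGd k hk.1 hk.2]; split_ifs <;> omega
            · rw [hsdef]; exact fun h => hsp ⟨h, hB⟩
          · refine Or.inr (Or.inr (fun k hk => ?_))
            rw [Finset.mem_Icc] at hk; rw [hGd k hk.1 hk.2]; split_ifs <;> omega
      rw [hsdef] at key; exact key
    rw [e1, e2, hm', hms']
    funext u v
    simp only [fSA, fA]
    ring
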